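/- arXiv:1805.05809 — 4 statements merged into one kernel-verified Lean document; each statement's English description precedes it below -/
import Mathlib

section
/- Let n_c, d, k be positive integers with k ≤ d, let λ : Fin d → ℝ with λ_q ≥ 0 for all q, and let c : Fin n_c → Fin d → ℝ. Consider pairs (Z, a) where Z : Fin n_c → Fin d → {0,1} satisfies ∑_{q} Z[p][q] = k for every p, and a : Fin d → Fin n_c → {0,1} satisfies ∑_{r=0}^{n_c−1} a[q][r] = ∑_{p} Z[p][q] for every q. Then the minimum over all such pairs (Z, a) of the cost ∑_{p,q} (−c[p][q])·Z[p][q] + ∑_{q} ∑_{r=0}^{n_c−1} 2·λ_q·r·a[q][r] is equal to the minimum over all Z alone (with every row k-sparse binary) of ∑_{p} ∑_{q} (−c[p][q])·Z[p][q] + ∑_{p1 ≠ p2} ∑_{q} λ_q·Z[p1][q]·Z[p2][q]. -/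
open Finset

lemma aux_gauss (m : ℕ) : 2 * (∑ i ∈ Finset.range m, (i:ℝ)) = (m:ℝ)^2 - m := by
  induction m with
  | zero => simp
  | succ n ih => rw [Finset.sum_range_succ]; push_cast; ring_nf; ring_nf at ih; linarith

lemma aux_nat_sum (S : Finset ℕ) : ∑ i ∈ Finset.range S.card, i ≤ ∑ i ∈ S, i := by
  induction S using Finset.strongInduction with
  | _ S ih =>
    rcases S.eq_empty_or_nonempty with h | h
    · simp [h]
    · set M := S.max' h with hMdef
      have hM : M ∈ S := S.max'_mem h
      have hcard : S.card ≤ M + 1 := by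
        have hsub : S ⊆ Finset.range (M+1) :=
          fun x hx => Finset.mem_range.2 (Nat.lt_succ_of_le (S.le_max' x hx))
        simpa using Finset.card_le_card hsub
      have hc : 0 < S.card := Finset.card_pos.2 h
      have h2 := ih (S.erase M) (Finset.erase_ssubset hM)
      rw [Finset.card_erase_of_mem hM] at h2
      calc ∑ i ∈ Finset.range S.card, i
          = ∑ i ∈ Finset.range (S.card - 1), i + (S.card - 1) := by
            conv_lhs => rw [← Nat.succ_pred_eq_of_pos hc]
            rw [Finset.sum_range_succ]; rfl
        _ ≤ ∑ i ∈ S.erase M, i + M := by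
            have : S.card - 1 ≤ M := by omega
            exact Nat.add_le_add h2 this
        _ = ∑ i ∈ S, i := by rw [Finset.sum_erase_add _ _ hM]

lemma aux_fin_sum {n : ℕ} (S : Finset (Fin n)) :
    ∑ i ∈ Finset.range S.card, (i:ℝ) ≤ ∑ i ∈ S, ((i:ℕ):ℝ) := by
  have himg : (S.image Fin.val).card = S.card := Finset.card_image_of_injective _ Fin.val_injective
  have h := aux_nat_sum (S.image Fin.val)
  rw [himg, Finset.sum_image (fun x _ y _ h => Fin.val_injective h)] at h
  calc ∑ i ∈ Finset.range S.card, (i:ℝ) = ((∑ i ∈ Finset.range S.card, i : ℕ) : ℝ) := by push_cast; rfl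
    _ ≤ ((∑ i ∈ S, (i:ℕ) : ℕ) : ℝ) := by exact_mod_cast h
    _ = ∑ i ∈ S, ((i:ℕ):ℝ) := by push_cast; rfl

lemma aux_binary_sum {n : ℕ} (f : Fin n → ℝ) (hf : ∀ i, f i = 0 ∨ f i = 1) :
    ∑ i, f i = ((univ.filter fun i => f i = 1).card : ℝ) := by
  rw [← Finset.sum_boole]
  refine Finset.sum_congr rfl fun i _ => ?_
  rcases hf i with h | h <;> simp [h]

lemma aux_weighted {n : ℕ} (f : Fin n → ℝ) (hf : ∀ i, f i = 0 ∨ f i = 1) (w : Fin n → ℝ) :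
    ∑ i, w i * f i = ∑ i ∈ univ.filter (fun i => f i = 1), w i := by
  rw [Finset.sum_filter]
  refine Finset.sum_congr rfl fun i _ => ?_
  rcases hf i with h | h <;> simp [h]

lemma aux_filter_image {n m : ℕ} (h : m ≤ n) :
    (univ.filter fun r : Fin n => (r:ℕ) < m).image Fin.val = Finset.range m := by
  ext x
  simp only [Finset.mem_image, Finset.mem_filter, Finset.mem_univ, true_and, Finset.mem_range]
  constructor
  · rintro ⟨r, hr, rfl⟩; exact hr
  · intro hx; exact ⟨⟨x, lt_of_lt_of_le hx h⟩, hx, rfl⟩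

lemma aux_filter_card {n m : ℕ} (h : m ≤ n) :
    (univ.filter fun r : Fin n => (r:ℕ) < m).card = m := by
  rw [← Finset.card_image_of_injective _ Fin.val_injective, aux_filter_image h, Finset.card_range]

lemma aux_lower {n : ℕ} (lam : ℝ) (hlam : 0 ≤ lam) (a : Fin n → ℝ)
    (ha : ∀ r, a r = 0 ∨ a r = 1) (m : ℕ) (hm : ∑ r, a r = (m:ℝ)) :
    lam * ((m:ℝ)^2 - m) ≤ ∑ r : Fin n, 2 * lam * ((r:ℕ):ℝ) * a r := by
  have hcard : (univ.filter fun r => a r = 1).card = m := by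
    have h0 := aux_binary_sum a ha; rw [hm] at h0; exact_mod_cast h0.symm
  have hle := aux_fin_sum (univ.filter fun r => a r = 1)
  rw [hcard] at hle
  have hsum : ∑ r : Fin n, 2 * lam * ((r:ℕ):ℝ) * a r
      = 2 * lam * ∑ r ∈ univ.filter (fun r => a r = 1), ((r:ℕ):ℝ) := by
    rw [Finset.mul_sum, ← aux_weighted a ha (fun r => 2 * lam * ((r:ℕ):ℝ))]
  rw [hsum]
  calc lam * ((m:ℝ)^2 - m) = 2 * lam * (∑ i ∈ Finset.range m, (i:ℝ)) := by
        rw [← aux_gauss m]; ring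
    _ ≤ _ := mul_le_mul_of_nonneg_left hle (by positivity)

lemma aux_opt_a {n : ℕ} (m : ℕ) (hmn : m ≤ n) (lam : ℝ) :
    (∀ r : Fin n, (if (r:ℕ) < m then (1:ℝ) else 0) = 0 ∨ (if (r:ℕ) < m then (1:ℝ) else 0) = 1)
    ∧ (∑ r : Fin n, (if (r:ℕ) < m then (1:ℝ) else 0)) = (m:ℝ)
    ∧ (∑ r : Fin n, 2 * lam * ((r:ℕ):ℝ) * (if (r:ℕ) < m then (1:ℝ) else 0))
        = lam * ((m:ℝ)^2 - m) := by
  have hb0 : ∀ r : Fin n, (if (r:ℕ) < m then (1:ℝ) else 0) = 0 ∨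
      (if (r:ℕ) < m then (1:ℝ) else 0) = 1 :=
    fun r => by by_cases h : (r:ℕ) < m <;> simp [h]
  refine ⟨hb0, ?_, ?_⟩
  · rw [Finset.sum_boole, aux_filter_card hmn]
  · rw [aux_weighted _ hb0 (fun r => 2 * lam * ((r:ℕ):ℝ))]
    have hset : (univ.filter fun r : Fin n => (if (r:ℕ) < m then (1:ℝ) else 0) = 1)
        = univ.filter fun r : Fin n => (r:ℕ) < m := by
      refine Finset.filter_congr fun r _ => ?_
      by_cases h : (r:ℕ) < m <;> simp [h]
    rw [hset]
    have : ∑ r ∈ univ.filter (fun r : Fin n => (r:ℕ) < m), (2 * lam * ((r:ℕ):ℝ))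
        = 2 * lam * ∑ i ∈ Finset.range m, (i:ℝ) := by
      rw [← aux_filter_image hmn, Finset.sum_image (fun x _ y _ h => Fin.val_injective h),
        Finset.mul_sum]
    rw [this]
    rw [show (2:ℝ) * lam * ∑ i ∈ Finset.range m, (i:ℝ) = lam * (2 * ∑ i ∈ Finset.range m, (i:ℝ)) by ring, aux_gauss m]

lemma aux_interaction {n_c d : ℕ} (lam : Fin d → ℝ) (Z : Fin n_c → Fin d → ℝ)
    (hZ : ∀ p q, Z p q = 0 ∨ Z p q = 1) :
    ∑ p1, ∑ p2 ∈ univ.filter (fun p2 => p2 ≠ p1), ∑ q, lam q * Z p1 q * Z p2 q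
    = ∑ q, lam q * ((∑ p, Z p q)^2 - ∑ p, Z p q) := by
  have hsq : ∀ p q, Z p q * Z p q = Z p q := fun p q => by rcases hZ p q with h|h <;> simp [h]
  have key : ∀ p1 : Fin n_c, ∑ p2 ∈ univ.filter (fun p2 => p2 ≠ p1), ∑ q, lam q * Z p1 q * Z p2 q
      = (∑ p2, ∑ q, lam q * Z p1 q * Z p2 q) - ∑ q, lam q * Z p1 q := by
    intro p1
    rw [Finset.filter_ne', Finset.sum_erase_eq_sub (Finset.mem_univ p1)]
    congr 1
    refine Finset.sum_congr rfl fun q _ => ?_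
    rw [mul_assoc, hsq]
  rw [Finset.sum_congr rfl fun p1 _ => key p1, Finset.sum_sub_distrib]
  have inner : ∀ q : Fin d, ∑ p1, ∑ p2, lam q * Z p1 q * Z p2 q = lam q * (∑ p, Z p q)^2 := by
    intro q
    rw [sq, Finset.sum_mul, Finset.mul_sum]
    refine Finset.sum_congr rfl fun p1 _ => ?_
    simp [Finset.mul_sum, mul_assoc]
  have h1 : ∑ p1 : Fin n_c, ∑ p2 : Fin n_c, ∑ q, lam q * Z p1 q * Z p2 q
      = ∑ q, lam q * (∑ p, Z p q)^2 := by
    calc ∑ p1 : Fin n_c, ∑ p2 : Fin n_c, ∑ q, lam q * Z p1 q * Z p2 q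
        = ∑ p1 : Fin n_c, ∑ q, ∑ p2 : Fin n_c, lam q * Z p1 q * Z p2 q :=
          Finset.sum_congr rfl fun _ _ => Finset.sum_comm
      _ = ∑ q, ∑ p1 : Fin n_c, ∑ p2 : Fin n_c, lam q * Z p1 q * Z p2 q := Finset.sum_comm
      _ = ∑ q, lam q * (∑ p, Z p q)^2 := Finset.sum_congr rfl fun q _ => inner q
  have h2 : ∑ p1 : Fin n_c, ∑ q, lam q * Z p1 q = ∑ q, lam q * ∑ p, Z p q := by
    rw [Finset.sum_comm]
    exact Finset.sum_congr rfl fun q _ => (Finset.mul_sum _ _ _).symm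
  rw [h1, h2, ← Finset.sum_sub_distrib]
  exact Finset.sum_congr rfl fun q _ => by ring


lemma aux_t1_bound {n_c d : ℕ} (c : Fin n_c → Fin d → ℝ) (Z : Fin n_c → Fin d → ℝ)
    (hZ : ∀ p q, Z p q = 0 ∨ Z p q = 1) :
    -(∑ p, ∑ q, |c p q|) ≤ ∑ p, ∑ q, (-(c p q)) * Z p q := by
  have h0 : -(∑ p, ∑ q, |c p q|) = ∑ p : Fin n_c, ∑ q : Fin d, -(|c p q|) := by
    simp [Finset.sum_neg_distrib]
  rw [h0]
  refine Finset.sum_le_sum fun p _ => Finset.sum_le_sum fun q _ => ?_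
  rcases hZ p q with h | h
  · simp [h, abs_nonneg]
  · rw [h, mul_one]; exact neg_le_neg (le_abs_self _)


/-- Theorem 1 (flow-free form): the minimum cost over feasible pairs (Z, a)
(the integral flows of value n_c·k on the network G') equals the minimum of the
hash-code objective over k-sparse binary codes Z alone. -/
theorem min_flow_cost_eq_min_hash_objective
    (n_c d k : ℕ) (hnc : 0 < n_c) (hd : 0 < d) (hk : 0 < k) (hkd : k ≤ d)
    (lam : Fin d → ℝ) (hlam : ∀ q, 0 ≤ lam q) (c : Fin n_c → Fin d → ℝ) :
    sInf {x : ℝ | ∃ (Z : Fin n_c → Fin d → ℝ) (a : Fin d → Fin n_c → ℝ),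
        (∀ p q, Z p q = 0 ∨ Z p q = 1) ∧ (∀ p, ∑ q, Z p q = k) ∧
        (∀ q r, a q r = 0 ∨ a q r = 1) ∧ (∀ q, ∑ r, a q r = ∑ p, Z p q) ∧
        x = (∑ p, ∑ q, (-(c p q)) * Z p q)
          + ∑ q, ∑ r : Fin n_c, 2 * lam q * ((r : ℕ) : ℝ) * a q r}
    = sInf {x : ℝ | ∃ Z : Fin n_c → Fin d → ℝ,
        (∀ p q, Z p q = 0 ∨ Z p q = 1) ∧ (∀ p, ∑ q, Z p q = k) ∧
        x = (∑ p, ∑ q, (-(c p q)) * Z p q)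
          + ∑ p1, ∑ p2 ∈ univ.filter (fun p2 => p2 ≠ p1), ∑ q, lam q * Z p1 q * Z p2 q} := by

  set A := {x : ℝ | ∃ (Z : Fin n_c → Fin d → ℝ) (a : Fin d → Fin n_c → ℝ),
        (∀ p q, Z p q = 0 ∨ Z p q = 1) ∧ (∀ p, ∑ q, Z p q = k) ∧
        (∀ q r, a q r = 0 ∨ a q r = 1) ∧ (∀ q, ∑ r, a q r = ∑ p, Z p q) ∧
        x = (∑ p, ∑ q, (-(c p q)) * Z p q)
          + ∑ q, ∑ r : Fin n_c, 2 * lam q * ((r : ℕ) : ℝ) * a q r} with hA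
  set B := {x : ℝ | ∃ Z : Fin n_c → Fin d → ℝ,
        (∀ p q, Z p q = 0 ∨ Z p q = 1) ∧ (∀ p, ∑ q, Z p q = k) ∧
        x = (∑ p, ∑ q, (-(c p q)) * Z p q)
          + ∑ p1, ∑ p2 ∈ univ.filter (fun p2 => p2 ≠ p1), ∑ q, lam q * Z p1 q * Z p2 q} with hB
  -- for any feasible Z, its hash cost is in both A and B
  have key : ∀ Z : Fin n_c → Fin d → ℝ, (∀ p q, Z p q = 0 ∨ Z p q = 1) →
      (∀ p, ∑ q, Z p q = (k:ℝ)) →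
      ((∑ p, ∑ q, (-(c p q)) * Z p q)
        + ∑ p1, ∑ p2 ∈ univ.filter (fun p2 => p2 ≠ p1), ∑ q, lam q * Z p1 q * Z p2 q) ∈ A := by
    intro Z hbin hrow
    set m : Fin d → ℕ := fun q => (univ.filter fun p => Z p q = 1).card with hm
    have hmle : ∀ q, m q ≤ n_c := fun q => by
      simpa using Finset.card_le_card (Finset.filter_subset _ (univ : Finset (Fin n_c)))
    have hSq : ∀ q, ∑ p, Z p q = ((m q : ℕ) : ℝ) := fun q =>
      aux_binary_sum (fun p => Z p q) (fun p => hbin p q)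
    refine ⟨Z, fun q r => if (r:ℕ) < m q then 1 else 0, hbin, hrow,
      fun q r => (aux_opt_a (m q) (hmle q) (lam q)).1 r, fun q => ?_, ?_⟩
    · rw [(aux_opt_a (m q) (hmle q) (lam q)).2.1, hSq q]
    · congr 1
      rw [aux_interaction lam Z hbin]
      refine Finset.sum_congr rfl fun q _ => ?_
      rw [(aux_opt_a (m q) (hmle q) (lam q)).2.2, hSq q]
  -- nonempty
  have Z0bin : ∀ (p : Fin n_c) (q : Fin d), (if (q:ℕ) < k then (1:ℝ) else 0) = 0 ∨
      (if (q:ℕ) < k then (1:ℝ) else 0) = 1 := fun p q => by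
    by_cases h : (q:ℕ) < k <;> simp [h]
  have Z0row : ∀ p : Fin n_c, ∑ q : Fin d, (if (q:ℕ) < k then (1:ℝ) else 0) = (k:ℝ) := fun p => by
    rw [Finset.sum_boole, aux_filter_card hkd]
  have hBne : B.Nonempty :=
    ⟨_, ⟨fun p q => if (q:ℕ) < k then 1 else 0, fun p q => Z0bin p q, Z0row, rfl⟩⟩
  have hAne : A.Nonempty :=
    ⟨_, key _ (fun p q => Z0bin p q) Z0row⟩
  -- bounded below
  have hAbdd : BddBelow A := by
    refine ⟨-(∑ p, ∑ q, |c p q|), fun x hx => ?_⟩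
    obtain ⟨Z, a, hbin, hrow, habin, hasum, hxeq⟩ := hx
    have h2 : 0 ≤ ∑ q, ∑ r : Fin n_c, 2 * lam q * ((r : ℕ) : ℝ) * a q r := by
      refine Finset.sum_nonneg fun q _ => Finset.sum_nonneg fun r _ => ?_
      rcases habin q r with h | h
      · simp [h]
      · rw [h, mul_one]; have h0 := hlam q; positivity
    have h1 := aux_t1_bound c Z hbin
    rw [hxeq]; linarith
  have hBbdd : BddBelow B := by
    refine ⟨-(∑ p, ∑ q, |c p q|), fun x hx => ?_⟩
    obtain ⟨Z, hbin, hrow, hxeq⟩ := hx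
    have h2 : 0 ≤ ∑ p1, ∑ p2 ∈ univ.filter (fun p2 => p2 ≠ p1), ∑ q, lam q * Z p1 q * Z p2 q := by
      refine Finset.sum_nonneg fun p1 _ => Finset.sum_nonneg fun p2 _ =>
        Finset.sum_nonneg fun q _ => ?_
      rcases hbin p1 q with h | h <;> rcases hbin p2 q with h' | h' <;>
        simp [h, h', hlam q]
    have h1 := aux_t1_bound c Z hbin
    rw [hxeq]; linarith
  apply le_antisymm
  · refine le_csInf hBne fun y hy => ?_
    obtain ⟨Z, hbin, hrow, rfl⟩ := hy
    exact csInf_le hAbdd (key Z hbin hrow)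
  · refine le_csInf hAne fun x hx => ?_
    obtain ⟨Z, a, hbin, hrow, habin, hasum, rfl⟩ := hx
    have hy : ((∑ p, ∑ q, (-(c p q)) * Z p q)
        + ∑ p1, ∑ p2 ∈ univ.filter (fun p2 => p2 ≠ p1), ∑ q, lam q * Z p1 q * Z p2 q) ∈ B :=
      ⟨Z, hbin, hrow, rfl⟩
    refine le_trans (csInf_le hBbdd hy) ?_
    have hmono : ∑ p1, ∑ p2 ∈ univ.filter (fun p2 => p2 ≠ p1), ∑ q, lam q * Z p1 q * Z p2 q
        ≤ ∑ q, ∑ r : Fin n_c, 2 * lam q * ((r : ℕ) : ℝ) * a q r := by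
      rw [aux_interaction lam Z hbin]
      refine Finset.sum_le_sum fun q _ => ?_
      set m : ℕ := (univ.filter fun p => Z p q = 1).card with hm
      have hSq : ∑ p, Z p q = ((m : ℕ) : ℝ) :=
        aux_binary_sum (fun p => Z p q) (fun p => hbin p q)
      rw [hSq]
      exact aux_lower (lam q) (hlam q) (a q) (habin q) m (by rw [hasum q, hSq])
    linarith
end

section
/- Let z_1, …, z_{n_c} ∈ {0,1}^d be binary vectors, let c_1, …, c_{n_c} ∈ ℝ^d, and let λ : Fin d → ℝ. For each q let y_q = ∑_{p} z_p[q]. Then ∑_{p} ∑_{q} (−c_p[q])·z_p[q] + ∑_{q} ∑_{r=0}^{y_q − 1} 2·λ_q·r = ∑_{p} −c_p^⊤ z_p + ∑_{p1 ≠ p2} ∑_{q} λ_q·z_{p1}[q]·z_{p2}[q]. -/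
open Finset

/-- Lemma 4.3 (flow-free form): the total cost of the feasible flow f_z determined by
binary vectors z_1,…,z_{n_c} equals ∑_p −c_p^⊤ z_p + ∑_{p1≠p2} z_{p1}^⊤ P z_{p2},
where P = diag(λ) and y_q = ∑_p z_p[q]. -/
theorem flow_cost_eq_objective
    (n_c d : ℕ) (z : Fin n_c → Fin d → ℕ) (hz : ∀ p q, z p q = 0 ∨ z p q = 1)
    (c : Fin n_c → Fin d → ℝ) (lam : Fin d → ℝ) :
    (∑ p, ∑ q, (-(c p q)) * (z p q : ℝ))
      + ∑ q, ∑ r ∈ Finset.range (∑ p, z p q), 2 * lam q * (r : ℝ)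
    = (∑ p, ∑ q, (-(c p q)) * (z p q : ℝ))
      + ∑ p1, ∑ p2 ∈ univ.filter (fun p2 => p2 ≠ p1),
          ∑ q, lam q * (z p1 q : ℝ) * (z p2 q : ℝ) := by
  congr 1
  have hswap : (∑ p1, ∑ p2 ∈ univ.filter (fun p2 => p2 ≠ p1),
      ∑ q, lam q * (z p1 q : ℝ) * (z p2 q : ℝ))
      = ∑ q : Fin d, ∑ p1, ∑ p2 ∈ univ.filter (fun p2 => p2 ≠ p1),
          lam q * (z p1 q : ℝ) * (z p2 q : ℝ) := by
    rw [Finset.sum_comm]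
    congr 1; ext p1; rw [Finset.sum_comm]
  rw [hswap]
  refine Finset.sum_congr rfl fun q _ => ?_
  set y := ∑ p, z p q with hy
  have hgauss : (∑ r ∈ Finset.range y, 2 * lam q * (r : ℝ))
      = lam q * ((y : ℝ) * (y : ℝ) - (y : ℝ)) := by
    have h : (∑ r ∈ Finset.range y, (r : ℝ)) * 2 = (y : ℝ) * ((y : ℝ) - 1) := by
      induction y with
      | zero => simp
      | succ n ih =>
        rw [Finset.sum_range_succ]
        push_cast
        push_cast at ih
        nlinarith
    rw [← Finset.mul_sum]
    linear_combination lam q * h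
  rw [hgauss]
  have hsq : ∀ p, ((z p q : ℝ)) * (z p q : ℝ) = (z p q : ℝ) := by
    intro p
    rcases hz p q with h | h <;> rw [h] <;> norm_num
  have hfull : (∑ p1, ∑ p2, lam q * (z p1 q : ℝ) * (z p2 q : ℝ))
      = lam q * ((y : ℝ) * (y : ℝ)) := by
    simp only [← Finset.mul_sum, ← Finset.sum_mul]
    rw [hy]
    push_cast
    ring
  have hdiag : (∑ p, lam q * (z p q : ℝ) * (z p q : ℝ)) = lam q * (y : ℝ) := by
    have : ∀ p, lam q * (z p q : ℝ) * (z p q : ℝ) = lam q * (z p q : ℝ) := by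
      intro p; rw [mul_assoc, hsq]
    rw [Finset.sum_congr rfl fun p _ => this p, ← Finset.mul_sum, hy]
    push_cast; ring
  have hsplit : ∀ p1 : Fin n_c, (∑ p2, lam q * (z p1 q : ℝ) * (z p2 q : ℝ))
      = lam q * (z p1 q : ℝ) * (z p1 q : ℝ)
        + ∑ p2 ∈ univ.filter (fun p2 => p2 ≠ p1), lam q * (z p1 q : ℝ) * (z p2 q : ℝ) := by
    intro p1
    rw [Finset.filter_ne']
    exact (Finset.add_sum_erase _ _ (Finset.mem_univ p1)).symm
  have : (∑ p1, ∑ p2 ∈ univ.filter (fun p2 => p2 ≠ p1),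
      lam q * (z p1 q : ℝ) * (z p2 q : ℝ))
      = lam q * ((y : ℝ) * (y : ℝ)) - lam q * (y : ℝ) := by
    rw [← hfull, ← hdiag, Finset.sum_congr rfl fun p1 _ => hsplit p1, Finset.sum_add_distrib]
    ring
  rw [this]; ring
end

section
/- Let λ : Fin d → ℝ with λ_q ≥ 0 for all q, let n_c be a positive integer, and for each q let y_q ≤ n_c be a natural number. Then for any binary a : Fin d → Fin n_c → {0,1} with ∑_{r=0}^{n_c−1} a[q][r] = y_q for every q, one has ∑_{q} ∑_{r=0}^{n_c−1} 2·λ_q·r·a[q][r] ≥ ∑_{q} λ_q·y_q·(y_q − 1). -/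
open Finset

lemma distinct_nat_sum_lb (S : Finset ℕ) : S.card * (S.card - 1) ≤ 2 * ∑ x ∈ S, x := by
  induction S using Finset.strongInduction with
  | _ S ih =>
    rcases S.eq_empty_or_nonempty with rfl | hS
    · simp
    · set m := S.max' hS with hmdef
      have hm : m ∈ S := S.max'_mem hS
      have hcard : S.card ≤ m + 1 := by
        have hsub : S ⊆ Finset.range (m + 1) := fun x hx =>
          Finset.mem_range.2 (Nat.lt_succ_of_le (S.le_max' x hx))
        simpa using Finset.card_le_card hsub
      have hih := ih (S.erase m) (Finset.erase_ssubset hm)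
      have hsumS : ∑ x ∈ S, x = m + ∑ x ∈ S.erase m, x :=
        (Finset.add_sum_erase _ _ hm).symm
      have hc : (S.erase m).card = S.card - 1 := Finset.card_erase_of_mem hm
      obtain ⟨k, hk⟩ : ∃ k, S.card = k + 1 :=
        ⟨S.card - 1, (Nat.succ_pred_eq_of_pos (Finset.card_pos.2 hS)).symm⟩
      rw [hk] at hcard ⊢
      rw [hc, hk] at hih
      rcases Nat.eq_zero_or_pos k with rfl | hkpos
      · simp
      · obtain ⟨j, rfl⟩ : ∃ j, k = j + 1 := ⟨k - 1, (Nat.succ_pred_eq_of_pos hkpos).symm⟩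
        simp only [Nat.add_sub_cancel] at hih ⊢
        rw [hsumS]
        nlinarith [hih, hcard]

lemma per_q_bound (n : ℕ) (b : Fin n → ℕ) (hb : ∀ r, b r = 0 ∨ b r = 1) :
    (∑ r, b r) * ((∑ r, b r) - 1) ≤ 2 * ∑ r : Fin n, (r : ℕ) * b r := by
  classical
  set S : Finset ℕ := (Finset.univ.filter fun r : Fin n => b r = 1).image Fin.val with hS
  have hcard : S.card = ∑ r, b r := by
    rw [hS, Finset.card_image_of_injective _ Fin.val_injective]
    rw [Finset.card_filter]
    apply Finset.sum_congr rfl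
    intro r _
    rcases hb r with h | h <;> simp [h]
  have hsum : ∑ x ∈ S, x = ∑ r : Fin n, (r : ℕ) * b r := by
    rw [hS, Finset.sum_image (fun x _ y _ h => Fin.val_injective h)]
    rw [Finset.sum_filter]
    apply Finset.sum_congr rfl
    intro r _
    rcases hb r with h | h <;> simp [h]
  calc (∑ r, b r) * ((∑ r, b r) - 1) = S.card * (S.card - 1) := by rw [hcard]
    _ ≤ 2 * ∑ x ∈ S, x := distinct_nat_sum_lb S
    _ = 2 * ∑ r : Fin n, (r : ℕ) * b r := by rw [hsum]

/-- Optimality direction of Lemma 4.2: any binary assignment a sending y_q units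
through the n_c parallel edges at b_q (with costs 2λ_q r, r = 0,…,n_c−1) incurs
cost at least ∑_q λ_q y_q (y_q − 1). -/
theorem parallel_edges_cost_lower_bound
    (d n_c : ℕ) (hnc : 0 < n_c) (lam : Fin d → ℝ) (hlam : ∀ q, 0 ≤ lam q)
    (y : Fin d → ℕ) (hy : ∀ q, y q ≤ n_c)
    (a : Fin d → Fin n_c → ℕ) (ha : ∀ q r, a q r = 0 ∨ a q r = 1)
    (hsum : ∀ q, ∑ r, a q r = y q) :
    ∑ q, ∑ r : Fin n_c, 2 * lam q * ((r : ℕ) : ℝ) * (a q r : ℝ)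
      ≥ ∑ q, lam q * (y q : ℝ) * ((y q : ℝ) - 1) := by
  apply Finset.sum_le_sum
  intro q _
  have hnat : (y q) * (y q - 1) ≤ 2 * ∑ r : Fin n_c, (r : ℕ) * a q r := by
    rw [← hsum q]; exact per_q_bound n_c (a q) (ha q)
  have hr : ∑ r : Fin n_c, 2 * lam q * ((r : ℕ) : ℝ) * (a q r : ℝ)
      = lam q * ((2 * ∑ r : Fin n_c, (r : ℕ) * a q r : ℕ) : ℝ) := by
    push_cast
    rw [Finset.mul_sum, Finset.mul_sum]
    exact Finset.sum_congr rfl fun r _ => by push_cast; ring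
  rw [hr]
  rcases Nat.eq_zero_or_pos (y q) with h0 | hpos
  · rw [h0]
    simp only [Nat.cast_zero, mul_zero, zero_mul]
    exact mul_nonneg (hlam q) (by positivity)
  · have hcast : ((y q : ℝ)) * ((y q : ℝ) - 1) = (((y q) * (y q - 1) : ℕ) : ℝ) := by
      have : ((y q - 1 : ℕ) : ℝ) = (y q : ℝ) - 1 := by
        rw [Nat.cast_sub hpos]; simp
      push_cast [this]
      ring
    rw [mul_assoc, hcast]
    exact mul_le_mul_of_nonneg_left (Nat.cast_le.2 hnat) (hlam q)
end

section
/- Let n_c, d, k, m be positive integers with k ≤ d, let c_1, …, c_{n_c} ∈ ℝ^d, and let λ : Fin d → ℝ with λ_q ≥ 0; write P = diag(λ_1,…,λ_d). Consider n = n_c·m points with labels y_1,…,y_n such that each class i ∈ {1,…,n_c} contains exactly m points. Then the minimum over all k-sparse binary vectors h_1, …, h_n ∈ {0,1}^d of ∑_{i=1}^{n_c} ∑_{k : y_k = i} (−c_i)^⊤ h_k + ∑_{i=1}^{n_c} ∑_{k : y_k = i} ∑_{l : y_l ≠ i} h_k^⊤ P h_l equals m times the minimum over all k-sparse binary vectors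 z_1, …, z_{n_c} ∈ {0,1}^d of ∑_{i=1}^{n_c} (−c_i)^⊤ z_i + ∑_{i ≠ j} z_i^⊤ (mP) z_j. -/
open Finset

section AuxRepar
variable {n_c d n : ℕ}

noncomputable def Gbar (c : Fin n_c → Fin d → ℝ) (lam : Fin d → ℝ) (y : Fin n → Fin n_c)
    (h : Fin n → Fin d → ℝ) : ℝ :=
  (∑ i, ∑ j ∈ univ.filter (fun j => y j = i), ∑ q, (-(c i q)) * h j q)
    + ∑ i, ∑ j ∈ univ.filter (fun j => y j = i),
        ∑ l ∈ univ.filter (fun l => y l ≠ i), ∑ q, lam q * h j q * h l q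

lemma flatten (c : Fin n_c → Fin d → ℝ) (lam : Fin d → ℝ) (y : Fin n → Fin n_c)
    (h : Fin n → Fin d → ℝ) :
    Gbar c lam y h = (∑ j, ∑ q, (-(c (y j) q)) * h j q)
      + ∑ j, ∑ l ∈ univ.filter (fun l => y l ≠ y j), ∑ q, lam q * h j q * h l q := by
  unfold Gbar
  congr 1
  · rw [← Finset.sum_fiberwise univ y (fun j => ∑ q, (-(c (y j) q)) * h j q)]
    refine Finset.sum_congr rfl fun i _ => Finset.sum_congr rfl fun j hj => ?_
    rcases Finset.mem_filter.mp hj with ⟨_, hji⟩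
    subst hji; rfl
  · rw [← Finset.sum_fiberwise univ y
      (fun j => ∑ l ∈ univ.filter (fun l => y l ≠ y j), ∑ q, lam q * h j q * h l q)]
    refine Finset.sum_congr rfl fun i _ => Finset.sum_congr rfl fun j hj => ?_
    rcases Finset.mem_filter.mp hj with ⟨_, hji⟩
    subst hji; rfl

lemma decomp (c : Fin n_c → Fin d → ℝ) (lam : Fin d → ℝ) (y : Fin n → Fin n_c)
    (i : Fin n_c) (h : Fin n → Fin d → ℝ) :
    Gbar c lam y h
    = (∑ j ∈ univ.filter (fun j => y j = i),
        ((∑ q, (-(c i q)) * h j q)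
          + 2 * ∑ q, lam q * h j q * (∑ l ∈ univ.filter (fun l => y l ≠ i), h l q)))
      + ((∑ j ∈ univ.filter (fun j => ¬ y j = i), ∑ q, (-(c (y j) q)) * h j q)
        + ∑ j ∈ univ.filter (fun j => ¬ y j = i),
            ∑ l ∈ (univ.filter (fun l => y l ≠ y j)).filter (fun l => ¬ y l = i),
              ∑ q, lam q * h j q * h l q) := by
  rw [flatten]
  -- split the unary sum
  rw [← Finset.sum_filter_add_sum_filter_not univ (fun j => y j = i)
        (fun j => ∑ q, (-(c (y j) q)) * h j q)]
  -- split the quadratic sum over j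
  rw [← Finset.sum_filter_add_sum_filter_not univ (fun j => y j = i)
        (fun j => ∑ l ∈ univ.filter (fun l => y l ≠ y j), ∑ q, lam q * h j q * h l q)]
  -- unary part on class i : replace c (y j) by c i
  have hu : ∑ j ∈ univ.filter (fun j => y j = i), ∑ q, (-(c (y j) q)) * h j q
      = ∑ j ∈ univ.filter (fun j => y j = i), ∑ q, (-(c i q)) * h j q := by
    refine Finset.sum_congr rfl fun j hj => ?_
    rcases Finset.mem_filter.mp hj with ⟨_, hji⟩
    rw [hji]
  -- quadratic part on class i: double sum = ∑_q lam h_j s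
  have hq1 : ∑ j ∈ univ.filter (fun j => y j = i),
        ∑ l ∈ univ.filter (fun l => y l ≠ y j), ∑ q, lam q * h j q * h l q
      = ∑ j ∈ univ.filter (fun j => y j = i),
          ∑ q, lam q * h j q * (∑ l ∈ univ.filter (fun l => y l ≠ i), h l q) := by
    refine Finset.sum_congr rfl fun j hj => ?_
    rcases Finset.mem_filter.mp hj with ⟨_, hji⟩
    rw [hji, Finset.sum_comm]
    refine Finset.sum_congr rfl fun q _ => ?_
    rw [Finset.mul_sum]
  -- split the inner l-sum for j outside class i
  have hq2 : ∑ j ∈ univ.filter (fun j => ¬ y j = i),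
        ∑ l ∈ univ.filter (fun l => y l ≠ y j), ∑ q, lam q * h j q * h l q
      = (∑ j ∈ univ.filter (fun j => ¬ y j = i),
          ∑ l ∈ univ.filter (fun l => y l = i), ∑ q, lam q * h j q * h l q)
        + ∑ j ∈ univ.filter (fun j => ¬ y j = i),
            ∑ l ∈ (univ.filter (fun l => y l ≠ y j)).filter (fun l => ¬ y l = i),
              ∑ q, lam q * h j q * h l q := by
    rw [← Finset.sum_add_distrib]
    refine Finset.sum_congr rfl fun j hj => ?_
    rcases Finset.mem_filter.mp hj with ⟨_, hji⟩
    rw [← Finset.sum_filter_add_sum_filter_not (univ.filter (fun l => y l ≠ y j))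
          (fun l => y l = i) (fun l => ∑ q, lam q * h j q * h l q)]
    congr 1
    refine Finset.sum_congr ?_ fun _ _ => rfl
    ext l
    simp only [Finset.mem_filter, Finset.mem_univ, true_and]
    constructor
    · rintro ⟨_, hl⟩; exact hl
    · intro hl; exact ⟨by rw [hl]; exact fun e => hji e.symm, hl⟩
  -- swap the mixed term
  have hq3 : ∑ j ∈ univ.filter (fun j => ¬ y j = i),
        ∑ l ∈ univ.filter (fun l => y l = i), ∑ q, lam q * h j q * h l q
      = ∑ j ∈ univ.filter (fun j => y j = i),
          ∑ q, lam q * h j q * (∑ l ∈ univ.filter (fun l => y l ≠ i), h l q) := by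
    rw [Finset.sum_comm]
    refine Finset.sum_congr rfl fun l hl => ?_
    rw [Finset.sum_comm]
    refine Finset.sum_congr rfl fun q _ => ?_
    rw [Finset.mul_sum]
    refine Finset.sum_congr rfl fun j hj => ?_
    ring
  rw [hu, hq1, hq2, hq3, Finset.sum_add_distrib]
  simp only [neg_mul]
  ring_nf
  rw [← Finset.sum_mul]
  ring

noncomputable def Ghat (m : ℕ) (c : Fin n_c → Fin d → ℝ) (lam : Fin d → ℝ)
    (z : Fin n_c → Fin d → ℝ) : ℝ :=
  (∑ i, ∑ q, (-(c i q)) * z i q)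
    + ∑ i, ∑ j ∈ univ.filter (fun j => j ≠ i), ∑ q, ((m:ℝ) * lam q) * z i q * z j q

/-- A single k-sparse binary code. -/
def IsCode (d k : ℕ) (v : Fin d → ℝ) : Prop :=
  (∀ q, v q = 0 ∨ v q = 1) ∧ ∑ q, v q = (k : ℝ)

lemma exchange (c : Fin n_c → Fin d → ℝ) (lam : Fin d → ℝ) (y : Fin n → Fin n_c)
    (k : ℕ) (i : Fin n_c) (h : Fin n → Fin d → ℝ)
    (hfeas : ∀ j, IsCode d k (h j)) (v : Fin d → ℝ)
    (hmin : ∀ w, IsCode d k w →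
      ((∑ q, (-(c i q)) * v q)
          + 2 * ∑ q, lam q * v q * (∑ l ∈ univ.filter (fun l => y l ≠ i), h l q))
      ≤ ((∑ q, (-(c i q)) * w q)
          + 2 * ∑ q, lam q * w q * (∑ l ∈ univ.filter (fun l => y l ≠ i), h l q))) :
    Gbar c lam y (fun j => if y j = i then v else h j) ≤ Gbar c lam y h := by
  set h' : Fin n → Fin d → ℝ := fun j => if y j = i then v else h j with hh'
  have hout : ∀ l, y l ≠ i → h' l = h l := by
    intro l hl; simp only [hh', if_neg hl]
  have hs : ∀ q, (∑ l ∈ univ.filter (fun l => y l ≠ i), h' l q)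
      = ∑ l ∈ univ.filter (fun l => y l ≠ i), h l q := by
    intro q
    refine Finset.sum_congr rfl fun l hl => ?_
    rw [hout l (Finset.mem_filter.mp hl).2]
  rw [decomp c lam y i h, decomp c lam y i h']
  refine add_le_add ?_ (le_of_eq ?_)
  · refine Finset.sum_le_sum fun j hj => ?_
    have hji : y j = i := (Finset.mem_filter.mp hj).2
    have hv : h' j = v := by simp only [hh', if_pos hji]
    rw [hv]
    calc (∑ q, (-(c i q)) * v q)
          + 2 * ∑ q, lam q * v q * (∑ l ∈ univ.filter (fun l => y l ≠ i), h' l q)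
        = (∑ q, (-(c i q)) * v q)
          + 2 * ∑ q, lam q * v q * (∑ l ∈ univ.filter (fun l => y l ≠ i), h l q) := by
          congr 2; exact Finset.sum_congr rfl fun q _ => by rw [hs q]
      _ ≤ (∑ q, (-(c i q)) * h j q)
          + 2 * ∑ q, lam q * h j q * (∑ l ∈ univ.filter (fun l => y l ≠ i), h l q) :=
          hmin (h j) (hfeas j)
  · congr 1
    · refine Finset.sum_congr rfl fun j hj => ?_
      rw [hout j (Finset.mem_filter.mp hj).2]
    · refine Finset.sum_congr rfl fun j hj => Finset.sum_congr rfl fun l hl => ?_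
      rw [hout j (Finset.mem_filter.mp hj).2,
        hout l (Finset.mem_filter.mp hl).2]

lemma value_const (c : Fin n_c → Fin d → ℝ) (lam : Fin d → ℝ) (y : Fin n → Fin n_c)
    (m : ℕ) (hclass : ∀ i, (univ.filter (fun j => y j = i)).card = m)
    (z : Fin n_c → Fin d → ℝ) :
    Gbar c lam y (fun j => z (y j)) = (m : ℝ) * Ghat m c lam z := by
  have hfiber : ∀ (g : Fin n_c → ℝ) (i : Fin n_c),
      ∑ l ∈ univ.filter (fun l => y l ≠ i), g (y l)
        = (m : ℝ) * ∑ j ∈ univ.filter (fun j => j ≠ i), g j := by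
    intro g i
    have h1 : ∑ l ∈ univ.filter (fun l => y l ≠ i), g (y l)
        = ∑ l : Fin n, (if y l ≠ i then g (y l) else 0) := by
      rw [Finset.sum_filter]
    have h2 : ∑ l : Fin n, (if y l ≠ i then g (y l) else 0)
        = ∑ i' : Fin n_c, ∑ l ∈ univ.filter (fun l => y l = i'),
            (if y l ≠ i then g (y l) else 0) := by
      rw [Finset.sum_fiberwise]
    have h3 : ∀ i' : Fin n_c, ∑ l ∈ univ.filter (fun l => y l = i'),
          (if y l ≠ i then g (y l) else 0)
        = (m : ℝ) * (if i' ≠ i then g i' else 0) := by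
      intro i'
      have hcg : ∑ l ∈ univ.filter (fun l => y l = i'),
            (if y l ≠ i then g (y l) else 0)
          = ∑ _l ∈ univ.filter (fun l => y l = i'), (if i' ≠ i then g i' else 0) := by
        refine Finset.sum_congr rfl fun l hl => ?_
        rw [(Finset.mem_filter.mp hl).2]
      rw [hcg, Finset.sum_const, hclass i', nsmul_eq_mul]
    rw [h1, h2, Finset.sum_congr rfl fun i' _ => h3 i', Finset.mul_sum,
      Finset.sum_filter]
    exact Finset.sum_congr rfl fun i' _ => by split <;> simp
  unfold Gbar Ghat
  rw [mul_add]
  congr 1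
  · rw [Finset.mul_sum]
    refine Finset.sum_congr rfl fun i _ => ?_
    have : ∑ j ∈ univ.filter (fun j => y j = i), ∑ q, (-(c i q)) * z (y j) q
        = ∑ _j ∈ univ.filter (fun j => y j = i), ∑ q, (-(c i q)) * z i q := by
      refine Finset.sum_congr rfl fun j hj => ?_
      rw [(Finset.mem_filter.mp hj).2]
    rw [this, Finset.sum_const, hclass i, nsmul_eq_mul]
  · rw [Finset.mul_sum]
    refine Finset.sum_congr rfl fun i _ => ?_
    have step1 : ∑ j ∈ univ.filter (fun j => y j = i),
          ∑ l ∈ univ.filter (fun l => y l ≠ i), ∑ q, lam q * z (y j) q * z (y l) q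
        = ∑ _j ∈ univ.filter (fun j => y j = i),
            ∑ l ∈ univ.filter (fun l => y l ≠ i), ∑ q, lam q * z i q * z (y l) q := by
      refine Finset.sum_congr rfl fun j hj => ?_
      rw [(Finset.mem_filter.mp hj).2]
    rw [step1, Finset.sum_const, hclass i, nsmul_eq_mul]
    rw [hfiber (fun i' => ∑ q, lam q * z i q * z i' q) i]
    have hin : ∀ j : Fin n_c, ∑ q, ((m:ℝ) * lam q) * z i q * z j q
        = (m:ℝ) * ∑ q, lam q * z i q * z j q := by
      intro j
      rw [Finset.mul_sum]
      exact Finset.sum_congr rfl fun q _ => by ring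
    rw [Finset.sum_congr rfl fun j _ => hin j, ← Finset.mul_sum]

lemma card_filter_lt (d k : ℕ) (hkd : k ≤ d) :
    (univ.filter (fun q : Fin d => (q:ℕ) < k)).card = k := by
  have hmap : (univ.filter (fun q : Fin d => (q:ℕ) < k))
      = Finset.map (Fin.castLEEmb hkd) univ := by
    ext q
    simp only [Finset.mem_filter, Finset.mem_univ, true_and, Finset.mem_map, Fin.castLEEmb]
    constructor
    · intro hq
      exact ⟨⟨q, hq⟩, rfl⟩
    · rintro ⟨a, -, rfl⟩
      simp
  rw [hmap]
  simp

lemma code_exists (d k : ℕ) (hkd : k ≤ d) :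
    IsCode d k (fun q : Fin d => if (q:ℕ) < k then (1:ℝ) else 0) := by
  constructor
  · intro q; by_cases hq : (q:ℕ) < k
    · right; simp [hq]
    · left; simp [hq]
  · rw [Finset.sum_boole, card_filter_lt d k hkd]

lemma code_finite (d k : ℕ) : {v : Fin d → ℝ | IsCode d k v}.Finite := by
  classical
  apply Set.Finite.subset (Set.finite_range
    (fun b : Fin d → Bool => fun q => if b q then (1:ℝ) else 0))
  rintro v ⟨hv, -⟩
  refine ⟨fun q => decide (v q = 1), funext fun q => ?_⟩
  rcases hv q with h0 | h1
  · simp [h0]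
  · simp [h1]

lemma binary_finite (n d : ℕ) :
    {h : Fin n → Fin d → ℝ | ∀ j q, h j q = 0 ∨ h j q = 1}.Finite := by
  classical
  apply Set.Finite.subset (Set.finite_range
    (fun b : Fin n → Fin d → Bool => fun j q => if b j q then (1:ℝ) else 0))
  intro h hh
  refine ⟨fun j q => decide (h j q = 1), funext fun j => funext fun q => ?_⟩
  rcases hh j q with h0 | h1
  · simp [h0]
  · simp [h1]

lemma make_const (c : Fin n_c → Fin d → ℝ) (lam : Fin d → ℝ) (y : Fin n → Fin n_c)
    (k : ℕ) (hkd : k ≤ d) (T : Finset (Fin n_c)) :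
    ∀ h : Fin n → Fin d → ℝ, (∀ j, IsCode d k (h j)) →
      ∃ h', (∀ j, IsCode d k (h' j))
        ∧ (∀ j j', y j = y j' → y j ∈ T → h' j = h' j')
        ∧ Gbar c lam y h' ≤ Gbar c lam y h := by
  classical
  induction T using Finset.induction_on with
  | empty =>
    intro h hh
    exact ⟨h, hh, fun j j' _ hji => absurd hji (Finset.notMem_empty _), le_refl _⟩
  | @insert a T hnotmem ih =>
    intro h hh
    obtain ⟨h₁, hh₁, hconst₁, hle₁⟩ := ih h hh
    set L : (Fin d → ℝ) → ℝ := fun w =>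
      (∑ q, (-(c a q)) * w q)
        + 2 * ∑ q, lam q * w q * (∑ l ∈ univ.filter (fun l => y l ≠ a), h₁ l q) with hL
    obtain ⟨v, hvcode, hvmin⟩ := Set.exists_min_image {w : Fin d → ℝ | IsCode d k w} L
      (code_finite d k) ⟨_, code_exists d k hkd⟩
    refine ⟨fun j => if y j = a then v else h₁ j, ?_, ?_, ?_⟩
    · intro j
      by_cases hj : y j = a
      · simpa [hj] using hvcode
      · simpa [hj] using hh₁ j
    · intro j j' hyy hmem
      rcases Finset.mem_insert.mp hmem with hja | hjT
      · have hja' : y j' = a := hyy ▸ hja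
        simp [hja, hja']
      · have hja : y j ≠ a := fun e => hnotmem (e ▸ hjT)
        have hja' : y j' ≠ a := fun e => hnotmem (e ▸ hyy ▸ hjT)
        simp only [if_neg hja, if_neg hja']
        exact hconst₁ j j' hyy hjT
    · exact le_trans
        (exchange c lam y k a h₁ hh₁ v (fun w hw => hvmin w hw)) hle₁


end AuxRepar

/-- Reparameterization between Equation (4) and Equation (5): minimizing the upper-bound
objective ḡ over individual k-sparse binary codes h_1,…,h_n (m codes per class, all sharing
the class-mean vector c_i) equals m times the minimum of the per-class objective ĝ with
P' = mP over one k-sparse binary code z_i per class. -/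
theorem min_gbar_eq_m_mul_min_ghat
    (n_c d k m : ℕ) (hnc : 0 < n_c) (hm : 0 < m) (hk : 0 < k) (hkd : k ≤ d)
    (c : Fin n_c → Fin d → ℝ) (lam : Fin d → ℝ) (hlam : ∀ q, 0 ≤ lam q)
    (n : ℕ) (hn : n = n_c * m) (y : Fin n → Fin n_c)
    (hclass : ∀ i, (univ.filter (fun j => y j = i)).card = m) :
    sInf {x : ℝ | ∃ h : Fin n → Fin d → ℝ,
        (∀ j q, h j q = 0 ∨ h j q = 1) ∧ (∀ j, ∑ q, h j q = k) ∧
        x = (∑ i, ∑ j ∈ univ.filter (fun j => y j = i), ∑ q, (-(c i q)) * h j q)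
          + ∑ i, ∑ j ∈ univ.filter (fun j => y j = i),
              ∑ l ∈ univ.filter (fun l => y l ≠ i), ∑ q, lam q * h j q * h l q}
    = m * sInf {x : ℝ | ∃ z : Fin n_c → Fin d → ℝ,
        (∀ i q, z i q = 0 ∨ z i q = 1) ∧ (∀ i, ∑ q, z i q = k) ∧
        x = (∑ i, ∑ q, (-(c i q)) * z i q)
          + ∑ i, ∑ j ∈ univ.filter (fun j => j ≠ i),
              ∑ q, ((m : ℝ) * lam q) * z i q * z j q} := by
  classical
  set A : Set ℝ := {x : ℝ | ∃ h : Fin n → Fin d → ℝ,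
      (∀ j q, h j q = 0 ∨ h j q = 1) ∧ (∀ j, ∑ q, h j q = k) ∧
      x = Gbar c lam y h} with hA
  set B : Set ℝ := {x : ℝ | ∃ z : Fin n_c → Fin d → ℝ,
      (∀ i q, z i q = 0 ∨ z i q = 1) ∧ (∀ i, ∑ q, z i q = k) ∧
      x = Ghat m c lam z} with hB
  show sInf A = (m : ℝ) * sInf B
  -- basic facts
  have hAfin : A.Finite := by
    apply Set.Finite.subset ((binary_finite n d).image (Gbar c lam y))
    rintro x ⟨h, hb, -, hx⟩
    exact ⟨h, hb, hx.symm⟩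
  have hBfin : B.Finite := by
    apply Set.Finite.subset ((binary_finite n_c d).image (Ghat m c lam))
    rintro x ⟨z, hb, -, hx⟩
    exact ⟨z, hb, hx.symm⟩
  obtain ⟨hw1, hw2⟩ := code_exists d k hkd
  have hAne : A.Nonempty :=
    ⟨_, ⟨fun _ => fun q => if (q:ℕ) < k then (1:ℝ) else 0,
      fun j q => hw1 q, fun j => hw2, rfl⟩⟩
  have hBne : B.Nonempty :=
    ⟨_, ⟨fun _ => fun q => if (q:ℕ) < k then (1:ℝ) else 0,
      fun i q => hw1 q, fun i => hw2, rfl⟩⟩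
  apply le_antisymm
  · -- sInf A ≤ m * sInf B
    obtain ⟨z, hz1, hz2, hzval⟩ := hBne.csInf_mem hBfin
    have hmem : Gbar c lam y (fun j => z (y j)) ∈ A :=
      ⟨fun j => z (y j), fun j q => hz1 (y j) q, fun j => hz2 (y j), rfl⟩
    calc sInf A ≤ Gbar c lam y (fun j => z (y j)) := csInf_le hAfin.bddBelow hmem
      _ = (m : ℝ) * Ghat m c lam z := value_const c lam y m hclass z
      _ = (m : ℝ) * sInf B := by rw [← hzval]
  · -- m * sInf B ≤ sInf A
    obtain ⟨h, hb, hs, hval⟩ := hAne.csInf_mem hAfin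
    have hfeas : ∀ j, IsCode d k (h j) := fun j => ⟨hb j, hs j⟩
    obtain ⟨h', hfeas', hconst', hle'⟩ :=
      make_const c lam y k hkd Finset.univ h hfeas
    have hne : ∀ i : Fin n_c, (univ.filter (fun j => y j = i)).Nonempty := by
      intro i
      rw [← Finset.card_pos, hclass i]
      exact hm
    set z : Fin n_c → Fin d → ℝ := fun i => h' (hne i).choose with hz
    have hyrep : ∀ i, y (hne i).choose = i := fun i =>
      (Finset.mem_filter.mp (hne i).choose_spec).2
    have hzc : ∀ i, IsCode d k (z i) := fun i => hfeas' _
    have hrep : h' = fun j => z (y j) := by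
      funext j
      exact (hconst' (hne (y j)).choose j (hyrep (y j)) (Finset.mem_univ _)).symm
    have hmemB : Ghat m c lam z ∈ B :=
      ⟨z, fun i q => (hzc i).1 q, fun i => (hzc i).2, rfl⟩
    calc (m : ℝ) * sInf B ≤ (m : ℝ) * Ghat m c lam z :=
          mul_le_mul_of_nonneg_left (csInf_le hBfin.bddBelow hmemB) (Nat.cast_nonneg m)
      _ = Gbar c lam y (fun j => z (y j)) := (value_const c lam y m hclass z).symm
      _ = Gbar c lam y h' := by rw [← hrep]
      _ ≤ Gbar c lam y h := hle'
      _ = sInf A := hval.symm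
end
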